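/- Let t > 0, γ ∈ (0,1), μ > 0, and let r : [0,t] → ℝ be continuous with modulus of continuity κ. For 0 ≤ τ < τ' ≤ t define v(s) = (1/Γ(1−γ)) ∫₀^s e^{−μξ^γ} r(s−ξ)/ξ^γ dξ. Then |v(τ') − v(τ)| ≤ (‖r‖_{[0,t]}/Γ(2−γ)) ((τ')^{1−γ} − τ^{1−γ}) + (κ(τ'−τ)/Γ(2−γ)) τ^{1−γ}, and moreover (τ')^{1−γ} − τ^{1−γ} ≤ (τ' − τ)^{1−γ}. -/

import Mathlib

/-! Split `v τ' - v τ` into the integral over `[τ, τ']` of the kernel at time `τ'` and the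
integral over `[0, τ]` of the kernel difference. Since `e^{-μ ξ^γ} ≤ 1`, the integrands are
bounded by `‖r‖ ξ^{-γ}` and `κ(τ' - τ) ξ^{-γ}` respectively, and
`∫ ξ^{-γ} = ξ^{1-γ}/(1-γ)` together with `(1-γ) Γ(1-γ) = Γ(2-γ)` gives the estimate. -/

open MeasureTheory Set

lemma Real.rpow_sub_rpow_le_rpow_sub {a b p : ℝ} (ha : 0 ≤ a) (hab : a ≤ b) (hp : 0 ≤ p)
    (hp1 : p ≤ 1) : b ^ p - a ^ p ≤ (b - a) ^ p := by
  have h := Real.rpow_add_le_add_rpow (sub_nonneg.mpr hab) ha hp hp1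
  rw [sub_add_cancel] at h
  linarith

lemma intervalIntegrable_div_rpow_of_continuousOn {g : ℝ → ℝ} {γ a b : ℝ} (hγ : γ < 1)
    (ha : 0 ≤ a) (hb : 0 ≤ b) (hg : ContinuousOn g (uIcc a b)) :
    IntervalIntegrable (fun ξ => g ξ / ξ ^ γ) volume a b := by
  have hint := (intervalIntegral.intervalIntegrable_rpow' (r := -γ) (a := a) (b := b)
    (by linarith)).mul_continuousOn hg
  refine hint.congr fun ξ hξ => ?_
  have hξ : 0 < ξ := (le_min ha hb).trans_lt hξ.1
  simp only [Real.rpow_neg hξ.le, div_eq_mul_inv, mul_comm]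

lemma abs_intervalIntegral_le_mul_rpow_sub {F : ℝ → ℝ} {γ C a b : ℝ} (hγ : γ < 1)
    (hab : a ≤ b) (hF : ∀ ξ ∈ Ioc a b, |F ξ| ≤ C * ξ ^ (-γ)) :
    |∫ ξ in a..b, F ξ| ≤ C * ((b ^ (1 - γ) - a ^ (1 - γ)) / (1 - γ)) := by
  have hbound := intervalIntegral.norm_integral_le_of_norm_le (f := F)
    (g := fun ξ => C * ξ ^ (-γ)) hab (Filter.Eventually.of_forall hF)
    ((intervalIntegral.intervalIntegrable_rpow' (r := -γ) (by linarith)).const_mul C)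
  rwa [intervalIntegral.integral_const_mul, integral_rpow (Or.inl (by linarith)),
    neg_add_eq_sub] at hbound

lemma abs_exp_mul_div_rpow_le {μ γ ξ c C : ℝ} (hμ : 0 ≤ μ) (hξ : 0 < ξ) (hc : |c| ≤ C) :
    |Real.exp (-(μ * ξ ^ γ)) * c / ξ ^ γ| ≤ C * ξ ^ (-γ) := by
  have hξγ : 0 < ξ ^ γ := Real.rpow_pos_of_pos hξ γ
  have hexp : Real.exp (-(μ * ξ ^ γ)) ≤ 1 :=
    Real.exp_le_one_iff.mpr (neg_nonpos.mpr (mul_nonneg hμ hξγ.le))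
  rw [abs_div, abs_mul, abs_of_pos (Real.exp_pos _), abs_of_pos hξγ, Real.rpow_neg hξ.le,
    ← div_eq_mul_inv]
  gcongr
  calc Real.exp (-(μ * ξ ^ γ)) * |c| ≤ 1 * C := by gcongr
    _ = C := one_mul C

lemma continuousOn_exp_neg_mul_rpow_mul_comp_sub {μ γ s a b : ℝ} {r : ℝ → ℝ}
    (hγ : 0 ≤ γ) (hr : ContinuousOn r (Icc (s - b) (s - a))) :
    ContinuousOn (fun ξ => Real.exp (-(μ * ξ ^ γ)) * r (s - ξ)) (Icc a b) := by
  refine ContinuousOn.mul ?_ (hr.comp (continuous_const.sub continuous_id).continuousOn ?_)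
  · exact (Real.continuous_exp.comp
      ((continuous_const.mul (Real.continuous_rpow_const hγ)).neg)).continuousOn
  · intro ξ hξ
    exact ⟨by linarith [hξ.2], by linarith [hξ.1]⟩

lemma Real.inv_Gamma_one_sub_mul_div {γ : ℝ} (hγ : γ < 1) (x : ℝ) :
    (Real.Gamma (1 - γ))⁻¹ * (x / (1 - γ)) = x / Real.Gamma (2 - γ) := by
  have h1γ : 1 - γ ≠ 0 := by linarith
  rw [show 2 - γ = (1 - γ) + 1 by ring, Real.Gamma_add_one h1γ]
  field_simp

noncomputable def temperedIntegrand (γ μ : ℝ) (r : ℝ → ℝ) (s ξ : ℝ) : ℝ :=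
  Real.exp (-(μ * ξ ^ γ)) * r (s - ξ) / ξ ^ γ

section temperedIntegrand

variable {γ μ t τ τ' : ℝ} {r : ℝ → ℝ}

lemma intervalIntegrable_temperedIntegrand {s a b : ℝ} (hγ0 : 0 ≤ γ) (hγ1 : γ < 1)
    (hr : ContinuousOn r (Icc 0 t)) (ha : 0 ≤ a) (hab : a ≤ b) (hbs : b ≤ s) (hst : s ≤ t) :
    IntervalIntegrable (temperedIntegrand γ μ r s) volume a b := by
  refine intervalIntegrable_div_rpow_of_continuousOn hγ1 ha (ha.trans hab) ?_
  rw [uIcc_of_le hab]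
  exact continuousOn_exp_neg_mul_rpow_mul_comp_sub hγ0
    (hr.mono (Icc_subset_Icc (by linarith) (by linarith)))

lemma integral_temperedIntegrand_sub (hγ0 : 0 ≤ γ) (hγ1 : γ < 1)
    (hr : ContinuousOn r (Icc 0 t)) (hτ0 : 0 ≤ τ) (hττ' : τ ≤ τ') (hτ't : τ' ≤ t) :
    (∫ ξ in (0:ℝ)..τ', temperedIntegrand γ μ r τ' ξ) - ∫ ξ in (0:ℝ)..τ, temperedIntegrand γ μ r τ ξ
      = (∫ ξ in τ..τ', temperedIntegrand γ μ r τ' ξ) +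
        ∫ ξ in (0:ℝ)..τ, (temperedIntegrand γ μ r τ' ξ - temperedIntegrand γ μ r τ ξ) := by
  have h₁ := intervalIntegrable_temperedIntegrand (μ := μ) hγ0 hγ1 hr le_rfl hτ0 hττ' hτ't
  rw [← intervalIntegral.integral_add_adjacent_intervals h₁
    (intervalIntegrable_temperedIntegrand hγ0 hγ1 hr hτ0 hττ' le_rfl hτ't),
    intervalIntegral.integral_sub h₁
      (intervalIntegrable_temperedIntegrand hγ0 hγ1 hr le_rfl hτ0 le_rfl (hττ'.trans hτ't))]
  ring

lemma abs_integral_temperedIntegrand_le {R : ℝ} (hγ1 : γ < 1) (hμ : 0 ≤ μ) (hτ0 : 0 ≤ τ)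
    (hττ' : τ ≤ τ') (hτ't : τ' ≤ t) (hR : ∀ ξ ∈ Icc 0 t, |r ξ| ≤ R) :
    |∫ ξ in τ..τ', temperedIntegrand γ μ r τ' ξ| ≤
      R * ((τ' ^ (1 - γ) - τ ^ (1 - γ)) / (1 - γ)) :=
  abs_intervalIntegral_le_mul_rpow_sub hγ1 hττ' fun ξ hξ =>
    abs_exp_mul_div_rpow_le hμ (hτ0.trans_lt hξ.1)
      (hR _ ⟨by linarith [hξ.2], by linarith [hξ.1]⟩)

lemma abs_integral_temperedIntegrand_sub_le {K : ℝ} (hγ1 : γ < 1) (hμ : 0 ≤ μ)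
    (hτ0 : 0 ≤ τ) (hττ' : τ ≤ τ') (hτ't : τ' ≤ t)
    (hK : ∀ ξ ∈ Icc 0 t, ∀ ξ' ∈ Icc 0 t, |ξ - ξ'| ≤ τ' - τ → |r ξ - r ξ'| ≤ K) :
    |∫ ξ in (0:ℝ)..τ, (temperedIntegrand γ μ r τ' ξ - temperedIntegrand γ μ r τ ξ)| ≤
      K * (τ ^ (1 - γ) / (1 - γ)) := by
  have h := abs_intervalIntegral_le_mul_rpow_sub
      (F := fun ξ => temperedIntegrand γ μ r τ' ξ - temperedIntegrand γ μ r τ ξ) (C := K)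
      hγ1 hτ0 fun ξ hξ => by
    simp only [temperedIntegrand]
    rw [← sub_div, ← mul_sub]
    refine abs_exp_mul_div_rpow_le hμ hξ.1 (hK _ ⟨by linarith [hξ.2], by linarith [hξ.1]⟩ _
      ⟨by linarith [hξ.2], by linarith [hξ.1]⟩ ?_)
    rw [sub_sub_sub_cancel_right, abs_of_nonneg (sub_nonneg.mpr hττ')]
  rwa [Real.zero_rpow (by linarith), sub_zero] at h

end temperedIntegrand

theorem stmt19_general (γ μ t : ℝ) (hγ0 : 0 < γ) (hγ1 : γ < 1) (hμ : 0 < μ)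
    (r : ℝ → ℝ) (hr : ContinuousOn r (Icc 0 t))
    (R : ℝ) (hR : IsGreatest {y | ∃ ξ ∈ Icc (0:ℝ) t, y = |r ξ|} R)
    (κ : ℝ → ℝ)
    (hκ : ∀ δ ≥ (0:ℝ), IsGreatest
      {y | ∃ ξ ∈ Icc (0:ℝ) t, ∃ ξ' ∈ Icc (0:ℝ) t, |ξ - ξ'| ≤ δ ∧ y = |r ξ - r ξ'|} (κ δ))
    (v : ℝ → ℝ)
    (hv : ∀ s, v s = (Real.Gamma (1 - γ))⁻¹ *
      ∫ ξ in (0:ℝ)..s, Real.exp (-(μ * ξ ^ γ)) * r (s - ξ) / ξ ^ γ)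
    (τ τ' : ℝ) (hτ0 : 0 ≤ τ) (hττ' : τ < τ') (hτ't : τ' ≤ t) :
    |v τ' - v τ| ≤ R / Real.Gamma (2 - γ) * (τ' ^ (1 - γ) - τ ^ (1 - γ)) +
      κ (τ' - τ) / Real.Gamma (2 - γ) * τ ^ (1 - γ) ∧
    τ' ^ (1 - γ) - τ ^ (1 - γ) ≤ (τ' - τ) ^ (1 - γ) := by
  refine ⟨?_, Real.rpow_sub_rpow_le_rpow_sub hτ0 hττ'.le (by linarith) (by linarith)⟩
  have hsplit : v τ' - v τ = (Real.Gamma (1 - γ))⁻¹ *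
      ((∫ ξ in τ..τ', temperedIntegrand γ μ r τ' ξ) +
        ∫ ξ in (0:ℝ)..τ, (temperedIntegrand γ μ r τ' ξ - temperedIntegrand γ μ r τ ξ)) := by
    rw [hv, hv, ← mul_sub]
    exact congrArg _ (integral_temperedIntegrand_sub hγ0.le hγ1 hr hτ0 hττ'.le hτ't)
  have hA := abs_integral_temperedIntegrand_le hγ1 hμ.le hτ0 hττ'.le hτ't
    fun ξ hξ => hR.2 ⟨ξ, hξ, rfl⟩
  have hB := abs_integral_temperedIntegrand_sub_le hγ1 hμ.le hτ0 hττ'.le hτ't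
    fun ξ hξ ξ' hξ' hd => (hκ (τ' - τ) (by linarith)).2 ⟨ξ, hξ, ξ', hξ', hd, rfl⟩
  have hΓ : 0 ≤ (Real.Gamma (1 - γ))⁻¹ := inv_nonneg.mpr (Real.Gamma_pos_of_pos (by linarith)).le
  rw [hsplit, abs_mul, abs_of_nonneg hΓ]
  calc _ ≤ (Real.Gamma (1 - γ))⁻¹ * (R * ((τ' ^ (1 - γ) - τ ^ (1 - γ)) / (1 - γ)) +
          κ (τ' - τ) * (τ ^ (1 - γ) / (1 - γ))) := by
        gcongr
        exact (abs_add_le _ _).trans (add_le_add hA hB)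
    _ = _ := by
      simp only [mul_add, mul_div_assoc', Real.inv_Gamma_one_sub_mul_div hγ1]
      ring

theorem stmt19 (γ μ t : ℝ) (hγ0 : 0 < γ) (hγ1 : γ < 1) (hμ : 0 < μ) (ht : 0 < t)
    (r : ℝ → ℝ) (hr : ContinuousOn r (Icc 0 t))
    (R : ℝ) (hR : IsGreatest {y | ∃ ξ ∈ Icc (0:ℝ) t, y = |r ξ|} R)
    (κ : ℝ → ℝ)
    (hκ : ∀ δ ≥ (0:ℝ), IsGreatest
      {y | ∃ ξ ∈ Icc (0:ℝ) t, ∃ ξ' ∈ Icc (0:ℝ) t, |ξ - ξ'| ≤ δ ∧ y = |r ξ - r ξ'|} (κ δ))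
    (v : ℝ → ℝ)
    (hv : ∀ s, v s = (Real.Gamma (1 - γ))⁻¹ *
      ∫ ξ in (0:ℝ)..s, Real.exp (-(μ * ξ ^ γ)) * r (s - ξ) / ξ ^ γ)
    (τ τ' : ℝ) (hτ0 : 0 ≤ τ) (hττ' : τ < τ') (hτ't : τ' ≤ t) :
    |v τ' - v τ| ≤ R / Real.Gamma (2 - γ) * (τ' ^ (1 - γ) - τ ^ (1 - γ)) +
      κ (τ' - τ) / Real.Gamma (2 - γ) * τ ^ (1 - γ) ∧
    τ' ^ (1 - γ) - τ ^ (1 - γ) ≤ (τ' - τ) ^ (1 - γ) :=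
  stmt19_general γ μ t hγ0 hγ1 hμ r hr R hR κ hκ v hv τ τ' hτ0 hττ' hτ't
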